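/- For every m ≥ 1 put n = 2m+1 and let B be the symmetric bilinear form on ℝⁿ determined by B(eᵢ, e_{2m−i}) = ((−1)ⁱ/2)·C(2m,i) for i = 0, …, 2m and B(eᵢ, eⱼ) = 0 whenever i + j ≠ 2m (its quadratic form is Σ_{j=0}^{m−1} (−1)ʲ·C(2m,j)·θⱼθ_{2m−j} + ((−1)ᵐ/2)·C(2m,m)·θₘ²). Then B is nondegenerate and, for each A ∈ {E₊, E₋, E₀}, one has B(Ax, y) + B(x, Ay) = 0 for all x, y ∈ ℝⁿ. -/

import Mathlib

open Matrix

/-- `E₊` of the `n`-dimensional irreducible representation of `sl(2,ℝ)`: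
`(E₊)_{i,i+1} = n−1−i`, other entries zero. -/
noncomputable def EplusN (n : ℕ) : Matrix (Fin n) (Fin n) ℝ :=
  Matrix.of fun i j => if (i : ℕ) + 1 = (j : ℕ) then (n : ℝ) - 1 - (i : ℕ) else 0

/-- `E₋`: `(E₋)_{i+1,i} = i+1`, other entries zero. -/
noncomputable def EminusN (n : ℕ) : Matrix (Fin n) (Fin n) ℝ :=
  Matrix.of fun i j => if (i : ℕ) = (j : ℕ) + 1 then ((i : ℕ) : ℝ) else 0

/-- `E₀ = diag(2i − (n−1))`. -/
noncomputable def EzeroN (n : ℕ) : Matrix (Fin n) (Fin n) ℝ :=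
  Matrix.of fun i j => if i = j then 2 * ((i : ℕ) : ℝ) - ((n : ℝ) - 1) else 0

/-- The symmetric bilinear form `B` on `ℝ^{2m+1}` with
`B(eᵢ, e_{2m−i}) = ((−1)ⁱ/2)·C(2m,i)` and `B(eᵢ,eⱼ) = 0` for `i+j ≠ 2m`. -/
noncomputable def Bmat (m : ℕ) : Matrix (Fin (2 * m + 1)) (Fin (2 * m + 1)) ℝ :=
  Matrix.of fun i j =>
    if (i : ℕ) + (j : ℕ) = 2 * m
      then ((-1 : ℝ) ^ (i : ℕ) / 2) * (Nat.choose (2 * m) (i : ℕ) : ℝ)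
      else 0

/-!
`Bmat m` is a diagonal matrix with its columns reversed (`j ↦ 2m − j`), so its determinant is,
up to sign, the product of the nonzero weights `wᵢ = (-1)ⁱ C(2m,i) / 2`. Since `Bmat m` is
symmetric, invariance under `A` means that `Bmat m * A`, whose `(i, j)` entry is
`wᵢ · A (2m − i) j`, is antisymmetric; for the three generators this reduces to the symmetry
`w (2m − i) = w i` and to the Pascal-type identity `(k + 1) C(2m, k + 1) = (2m − k) C(2m, k)`.
-/

theorem Matrix.IsSkewAdjoint.dotProduct_mulVec_add_eq_zero {n R : Type*} [Fintype n] [CommRing R]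
    {J A : Matrix n n R} (h : J.IsSkewAdjoint A) (x y : n → R) :
    A *ᵥ x ⬝ᵥ J *ᵥ y + x ⬝ᵥ J *ᵥ (A *ᵥ y) = 0 := by
  rw [← vecMul_transpose, dotProduct_mulVec, vecMul_vecMul, h, dotProduct_mulVec,
    dotProduct_mulVec, vecMul_vecMul, Matrix.mul_neg, vecMul_neg, neg_dotProduct, neg_add_cancel]

theorem Matrix.isSkewAdjoint_of_transpose_mul_eq_neg {n R : Type*} [Fintype n] [CommRing R]
    {J A : Matrix n n R} (hJ : Jᵀ = J) (h : (J * A)ᵀ = -(J * A)) : J.IsSkewAdjoint A := by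
  rw [Matrix.IsSkewAdjoint, Matrix.IsAdjointPair, Matrix.mul_neg, ← h, transpose_mul, hJ]

noncomputable def BmatWeight (m k : ℕ) : ℝ := (-1) ^ k / 2 * (2 * m).choose k

theorem BmatWeight_ne_zero {m k : ℕ} (hk : k ≤ 2 * m) : BmatWeight m k ≠ 0 := by
  have := Nat.choose_pos hk
  unfold BmatWeight
  positivity

theorem BmatWeight_two_mul_sub {m k : ℕ} (hk : k ≤ 2 * m) :
    BmatWeight m (2 * m - k) = BmatWeight m k := by
  rw [BmatWeight, BmatWeight, Nat.choose_symm hk, neg_one_pow_eq_pow_mod_two,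
    neg_one_pow_eq_pow_mod_two (R := ℝ) k, show (2 * m - k) % 2 = k % 2 by omega]

theorem succ_mul_BmatWeight_succ {m k : ℕ} (hk : k ≤ 2 * m) :
    (k + 1) * BmatWeight m (k + 1) = -((2 * m - k) * BmatWeight m k) := by
  have h := congrArg (Nat.cast : ℕ → ℝ) (Nat.choose_succ_right_eq (2 * m) k)
  push_cast [Nat.cast_sub hk] at h
  simp only [BmatWeight, pow_succ]
  linear_combination -(-1) ^ k / 2 * h

theorem mul_BmatWeight_add_mul_BmatWeight_eq_zero {m i j : ℕ} (h : i + j = 2 * m + 1) :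
    i * BmatWeight m i + j * BmatWeight m j = 0 := by
  obtain _ | k := i
  · obtain rfl : j = 2 * m + 1 := by omega
    simp [BmatWeight]
  have hk : k ≤ 2 * m := by omega
  obtain rfl : j = 2 * m - k := by omega
  rw [BmatWeight_two_mul_sub hk]
  push_cast [Nat.cast_sub hk]
  linear_combination succ_mul_BmatWeight_succ hk

theorem sub_mul_BmatWeight_add_sub_mul_BmatWeight_eq_zero {m i j : ℕ} (h : i + j + 1 = 2 * m) :
    (2 * m - i) * BmatWeight m i + (2 * m - j) * BmatWeight m j = 0 := by
  have key := mul_BmatWeight_add_mul_BmatWeight_eq_zero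
    (m := m) (i := 2 * m - i) (j := 2 * m - j) (by omega)
  rw [BmatWeight_two_mul_sub (by omega), BmatWeight_two_mul_sub (by omega),
    Nat.cast_sub (by omega), Nat.cast_sub (by omega)] at key
  exact_mod_cast key

theorem Bmat_eq_submatrix_diagonal (m : ℕ) :
    Bmat m = (diagonal fun i : Fin (2 * m + 1) => BmatWeight m i).submatrix id Fin.revPerm := by
  ext i j
  simp only [Bmat, of_apply, submatrix_apply, id, Fin.revPerm_apply, diagonal_apply, BmatWeight,
    Fin.ext_iff, Fin.val_rev]
  congr 1
  exact propext (by omega)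

theorem det_Bmat_ne_zero (m : ℕ) : (Bmat m).det ≠ 0 := by
  rw [Bmat_eq_submatrix_diagonal, det_permute', det_diagonal]
  exact mul_ne_zero (by simp)
    (Finset.prod_ne_zero_iff.mpr fun i _ => BmatWeight_ne_zero (by omega))

theorem Bmat_transpose (m : ℕ) : (Bmat m)ᵀ = Bmat m := by
  ext i j
  simp only [transpose_apply, Bmat, of_apply]
  by_cases h : (i : ℕ) + j = 2 * m
  · rw [if_pos (by omega), if_pos h]
    change BmatWeight m j = BmatWeight m i
    rw [show (j : ℕ) = 2 * m - i by omega, BmatWeight_two_mul_sub (by omega)]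
  · rw [if_neg (by omega), if_neg h]

theorem Bmat_mul_apply {m : ℕ} (A : Matrix (Fin (2 * m + 1)) (Fin (2 * m + 1)) ℝ)
    (i j : Fin (2 * m + 1)) : (Bmat m * A) i j = BmatWeight m i * A i.rev j := by
  rw [Bmat_eq_submatrix_diagonal, mul_apply, Finset.sum_eq_single i.rev]
  · simp
  · intro k _ hk
    have hik : i ≠ k.rev := fun h => hk (by rw [h, Fin.rev_rev])
    rw [submatrix_apply, id, Fin.revPerm_apply, diagonal_apply_ne _ hik, zero_mul]
  · simp

theorem Bmat_isSkewAdjoint_of_apply_rev {m : ℕ}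
    {A : Matrix (Fin (2 * m + 1)) (Fin (2 * m + 1)) ℝ}
    (h : ∀ i j : Fin (2 * m + 1), BmatWeight m j * A j.rev i = -(BmatWeight m i * A i.rev j)) :
    (Bmat m).IsSkewAdjoint A := by
  refine Matrix.isSkewAdjoint_of_transpose_mul_eq_neg (Bmat_transpose m) ?_
  ext i j
  simp only [transpose_apply, Matrix.neg_apply, Bmat_mul_apply]
  exact h i j

theorem Bmat_isSkewAdjoint_EplusN (m : ℕ) : (Bmat m).IsSkewAdjoint (EplusN (2 * m + 1)) := by
  refine Bmat_isSkewAdjoint_of_apply_rev fun i j => ?_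
  simp only [EplusN, of_apply, Fin.val_rev]
  by_cases h : (i : ℕ) + j = 2 * m + 1
  · rw [if_pos (by omega), if_pos (by omega), Nat.cast_sub (by omega), Nat.cast_sub (by omega)]
    push_cast
    linear_combination mul_BmatWeight_add_mul_BmatWeight_eq_zero h
  · rw [if_neg (by omega), if_neg (by omega)]
    simp

theorem Bmat_isSkewAdjoint_EminusN (m : ℕ) : (Bmat m).IsSkewAdjoint (EminusN (2 * m + 1)) := by
  refine Bmat_isSkewAdjoint_of_apply_rev fun i j => ?_
  simp only [EminusN, of_apply, Fin.val_rev]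
  by_cases h : (i : ℕ) + j + 1 = 2 * m
  · rw [if_pos (by omega), if_pos (by omega), Nat.cast_sub (by omega), Nat.cast_sub (by omega)]
    push_cast
    linear_combination sub_mul_BmatWeight_add_sub_mul_BmatWeight_eq_zero h
  · rw [if_neg (by omega), if_neg (by omega)]
    simp

theorem Bmat_isSkewAdjoint_EzeroN (m : ℕ) : (Bmat m).IsSkewAdjoint (EzeroN (2 * m + 1)) := by
  refine Bmat_isSkewAdjoint_of_apply_rev fun i j => ?_
  simp only [EzeroN, of_apply, Fin.ext_iff, Fin.val_rev]
  by_cases h : (i : ℕ) + j = 2 * m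
  · rw [if_pos (by omega), if_pos (by omega), Nat.cast_sub (by omega), Nat.cast_sub (by omega),
      show (j : ℕ) = 2 * m - i by omega, BmatWeight_two_mul_sub (by omega)]
    push_cast [Nat.cast_sub (show (i : ℕ) ≤ 2 * m by omega)]
    ring
  · rw [if_neg (by omega), if_neg (by omega)]
    simp

theorem stmt16_general (m : ℕ) :
    (∀ x : Fin (2 * m + 1) → ℝ,
        (∀ y : Fin (2 * m + 1) → ℝ, x ⬝ᵥ (Bmat m).mulVec y = 0) → x = 0) ∧
    (∀ A ∈ ({EplusN (2 * m + 1), EminusN (2 * m + 1), EzeroN (2 * m + 1)} :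
          Set (Matrix (Fin (2 * m + 1)) (Fin (2 * m + 1)) ℝ)),
      ∀ x y : Fin (2 * m + 1) → ℝ,
        (A.mulVec x) ⬝ᵥ (Bmat m).mulVec y + x ⬝ᵥ (Bmat m).mulVec (A.mulVec y) = 0) := by
  refine ⟨fun x => (nondegenerate_of_det_ne_zero (det_Bmat_ne_zero m)).eq_zero_of_ortho, ?_⟩
  rintro A (rfl | rfl | rfl)
  · exact (Bmat_isSkewAdjoint_EplusN m).dotProduct_mulVec_add_eq_zero
  · exact (Bmat_isSkewAdjoint_EminusN m).dotProduct_mulVec_add_eq_zero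
  · exact (Bmat_isSkewAdjoint_EzeroN m).dotProduct_mulVec_add_eq_zero

/-- In odd dimension `n = 2m+1`, the bilinear form `B` is nondegenerate and invariant
under the irreducible `sl(2,ℝ)`: `B(Ax,y) + B(x,Ay) = 0` for `A ∈ {E₊, E₋, E₀}`. -/
theorem stmt16 (m : ℕ) (hm : 1 ≤ m) :
    (∀ x : Fin (2 * m + 1) → ℝ,
        (∀ y : Fin (2 * m + 1) → ℝ, x ⬝ᵥ (Bmat m).mulVec y = 0) → x = 0) ∧
    (∀ A ∈ ({EplusN (2 * m + 1), EminusN (2 * m + 1), EzeroN (2 * m + 1)} :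
          Set (Matrix (Fin (2 * m + 1)) (Fin (2 * m + 1)) ℝ)),
      ∀ x y : Fin (2 * m + 1) → ℝ,
        (A.mulVec x) ⬝ᵥ (Bmat m).mulVec y + x ⬝ᵥ (Bmat m).mulVec (A.mulVec y) = 0) :=
  stmt16_general m
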